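/- Let A ∈ ℝ^{m×n}, let V be a finite set of vectors in ℝ^m with σ_min(V) > 0, and let (I, J) be any partition of V (I ∪ J = V, I ∩ J = ∅). Then f_A(I) + f_A(J) ≥ f_A(V) / (2·κ(V)), i.e., f_A(I) + f_A(J) ≥ σ_min(V)·f_A(V) / (2·σ_max(V)). -/

import Mathlib

open scoped RealInnerProductSpace

attribute [local instance] Classical.decEq

noncomputable def fVec {m : ℕ} (u : EuclideanSpace ℝ (Fin m))
    (S : Finset (EuclideanSpace ℝ (Fin m))) : ℝ :=
  ‖(Submodule.orthogonalProjectionOnto (Submodule.span ℝ (S : Set (EuclideanSpace ℝ (Fin m)))) u :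
      EuclideanSpace ℝ (Fin m))‖ ^ 2

noncomputable def fMat {m n : ℕ} (A : Fin n → EuclideanSpace ℝ (Fin m))
    (S : Finset (EuclideanSpace ℝ (Fin m))) : ℝ :=
  ∑ j, fVec (A j) S

noncomputable def sigmaMin {m : ℕ} (S : Finset (EuclideanSpace ℝ (Fin m))) : ℝ :=
  sInf {r : ℝ | ∃ α : S → ℝ, ∑ v, (α v) ^ 2 = 1 ∧
    r = ‖∑ v, α v • (v : EuclideanSpace ℝ (Fin m))‖ ^ 2}

noncomputable def sigmaMax {m : ℕ} (S : Finset (EuclideanSpace ℝ (Fin m))) : ℝ :=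
  sSup {r : ℝ | ∃ α : S → ℝ, ∑ v, (α v) ^ 2 = 1 ∧
    r = ‖∑ v, α v • (v : EuclideanSpace ℝ (Fin m))‖ ^ 2}

def IsGreedySeq {m nA nB : ℕ} (A : Fin nA → EuclideanSpace ℝ (Fin m))
    (B : Fin nB → EuclideanSpace ℝ (Fin m))
    (T : ℕ → Finset (EuclideanSpace ℝ (Fin m))) (b : ℕ → Fin nB) : Prop :=
  T 0 = ∅ ∧ ∀ i, T (i + 1) = insert (B (b i)) (T i) ∧
    ∀ j, fMat A (insert (B j) (T i)) ≤ fMat A (insert (B (b i)) (T i))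

/-!
Write the projection `x` of `u` onto `span V` as `∑ α v • v` and split it as `y + z`, with `y`
supported on `I` and `z` on `J \ I`. As `x`, `y`, `z` lie in the spans onto which `u` is projected,
`‖x‖² = ⟪u, y⟫ + ⟪u, z⟫ ≤ √f_u(I) ‖y‖ + √f_u(J) ‖z‖`, so Cauchy–Schwarz and the upper Rayleigh bound
give `‖x‖⁴ ≤ (f_u(I) + f_u(J)) σ_max ∑ α²`, while the lower Rayleigh bound gives
`σ_min ∑ α² ≤ ‖x‖²`. Hence `σ_min f_u(V) ≤ σ_max (f_u(I) + f_u(J))` for every column `u` of `A`.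
-/

lemma Finset.sum_union_eq_sum_add_sum_sdiff {ι M : Type*} [DecidableEq ι] [AddCommMonoid M]
    (I J : Finset ι) (f : ι → M) :
    ∑ i ∈ I ∪ J, f i = ∑ i ∈ I, f i + ∑ i ∈ J \ I, f i := by
  rw [← Finset.union_sdiff_self_eq_union, Finset.sum_union Finset.disjoint_sdiff]

theorem Submodule.inner_starProjection_eq_of_mem {𝕜 E : Type*} [RCLike 𝕜]
    [NormedAddCommGroup E] [InnerProductSpace 𝕜 E] (K : Submodule 𝕜 E)
    [K.HasOrthogonalProjection] (u : E) {w : E} (hw : w ∈ K) :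
    inner 𝕜 (K.starProjection u) w = inner 𝕜 u w :=
  K.inner_orthogonalProjectionOnto_eq_of_mem_right ⟨w, hw⟩ u

lemma mul_le_mul_of_sq_le_mul_of_mul_le {σ τ c s X : ℝ} (hσ : 0 ≤ σ) (hτ : 0 ≤ τ) (hc : 0 ≤ c)
    (hX : 0 ≤ X) (hX2 : X ^ 2 ≤ c * (τ * s)) (hsX : σ * s ≤ X) : σ * X ≤ τ * c := by
  rcases hX.eq_or_lt with rfl | hX
  · rw [mul_zero]
    positivity
  · refine le_of_mul_le_mul_right ?_ hX
    nlinarith [mul_le_mul_of_nonneg_left hX2 hσ, mul_le_mul_of_nonneg_left hsX (mul_nonneg hc hτ)]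

section RayleighQuotients

variable {m : ℕ}

def rayleighQuotients (V : Finset (EuclideanSpace ℝ (Fin m))) : Set ℝ :=
  {r : ℝ | ∃ α : V → ℝ, ∑ v, (α v) ^ 2 = 1 ∧
    r = ‖∑ v, α v • (v : EuclideanSpace ℝ (Fin m))‖ ^ 2}

lemma nonneg_of_mem_rayleighQuotients {V : Finset (EuclideanSpace ℝ (Fin m))} {r : ℝ}
    (hr : r ∈ rayleighQuotients V) : 0 ≤ r := by
  obtain ⟨α, -, rfl⟩ := hr
  positivity

lemma bddAbove_rayleighQuotients (V : Finset (EuclideanSpace ℝ (Fin m))) :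
    BddAbove (rayleighQuotients V) := by
  refine ⟨∑ v : V, ‖(v : EuclideanSpace ℝ (Fin m))‖ ^ 2, ?_⟩
  rintro _ ⟨α, hα, rfl⟩
  calc ‖∑ v, α v • (v : EuclideanSpace ℝ (Fin m))‖ ^ 2
      ≤ (∑ v, |α v| * ‖(v : EuclideanSpace ℝ (Fin m))‖) ^ 2 := by
        gcongr
        refine (norm_sum_le _ _).trans_eq (Finset.sum_congr rfl fun v _ => ?_)
        rw [norm_smul, Real.norm_eq_abs]
    _ ≤ (∑ v, |α v| ^ 2) * ∑ v : V, ‖(v : EuclideanSpace ℝ (Fin m))‖ ^ 2 :=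
        Finset.sum_mul_sq_le_sq_mul_sq _ _ _
    _ = ∑ v : V, ‖(v : EuclideanSpace ℝ (Fin m))‖ ^ 2 := by simp only [sq_abs, hα, one_mul]

lemma sigmaMin_nonneg (V : Finset (EuclideanSpace ℝ (Fin m))) : 0 ≤ sigmaMin V :=
  Real.sInf_nonneg fun _ => nonneg_of_mem_rayleighQuotients

lemma sigmaMax_nonneg (V : Finset (EuclideanSpace ℝ (Fin m))) : 0 ≤ sigmaMax V :=
  Real.sSup_nonneg fun _ => nonneg_of_mem_rayleighQuotients

lemma norm_sq_div_mem_rayleighQuotients (V : Finset (EuclideanSpace ℝ (Fin m)))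
    (β : EuclideanSpace ℝ (Fin m) → ℝ) (hβ : 0 < ∑ v ∈ V, β v ^ 2) :
    ‖∑ v ∈ V, β v • v‖ ^ 2 / ∑ v ∈ V, β v ^ 2 ∈ rayleighQuotients V := by
  set c := √(∑ v ∈ V, β v ^ 2)
  have hc : 0 < c := Real.sqrt_pos.2 hβ
  have hc2 : c ^ 2 = ∑ v ∈ V, β v ^ 2 := Real.sq_sqrt hβ.le
  refine ⟨fun v => β v / c, ?_, ?_⟩
  · simp_rw [div_pow, ← Finset.sum_div, Finset.sum_coe_sort V (fun v => β v ^ 2), hc2]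
    exact div_self hβ.ne'
  · simp_rw [div_eq_inv_mul, ← smul_smul, ← Finset.smul_sum,
      Finset.sum_coe_sort V (fun v => β v • v), norm_smul, mul_pow, norm_inv, Real.norm_eq_abs,
      abs_of_pos hc, inv_pow, hc2]

lemma sigmaMin_mul_sum_sq_le_norm_sq (V : Finset (EuclideanSpace ℝ (Fin m)))
    (β : EuclideanSpace ℝ (Fin m) → ℝ) :
    sigmaMin V * ∑ v ∈ V, β v ^ 2 ≤ ‖∑ v ∈ V, β v • v‖ ^ 2 := by
  rcases (Finset.sum_nonneg fun v _ => sq_nonneg (β v) : 0 ≤ ∑ v ∈ V, β v ^ 2).eq_or_lt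
    with hβ | hβ
  · rw [← hβ, mul_zero]
    positivity
  · rw [← le_div_iff₀ hβ]
    exact csInf_le ⟨0, fun _ => nonneg_of_mem_rayleighQuotients⟩
      (norm_sq_div_mem_rayleighQuotients V β hβ)

lemma norm_sq_le_sigmaMax_mul_sum_sq {I V : Finset (EuclideanSpace ℝ (Fin m))} (hIV : I ⊆ V)
    (β : EuclideanSpace ℝ (Fin m) → ℝ) :
    ‖∑ v ∈ I, β v • v‖ ^ 2 ≤ sigmaMax V * ∑ v ∈ I, β v ^ 2 := by
  set γ : EuclideanSpace ℝ (Fin m) → ℝ := fun v => if v ∈ I then β v else 0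
  have hsum : ∑ v ∈ V, γ v • v = ∑ v ∈ I, β v • v := by
    simp_rw [γ, ite_smul, zero_smul, Finset.sum_ite_mem, Finset.inter_eq_right.2 hIV]
  have hsq : ∑ v ∈ V, γ v ^ 2 = ∑ v ∈ I, β v ^ 2 := by
    simp_rw [γ, ite_pow, zero_pow two_ne_zero, Finset.sum_ite_mem, Finset.inter_eq_right.2 hIV]
  rw [← hsum, ← hsq]
  rcases (Finset.sum_nonneg fun v _ => sq_nonneg (γ v) : 0 ≤ ∑ v ∈ V, γ v ^ 2).eq_or_lt
    with hγ | hγ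
  · have hγ0 : ∀ v ∈ V, γ v = 0 := fun v hv =>
      pow_eq_zero_iff two_ne_zero |>.1 <|
        (Finset.sum_eq_zero_iff_of_nonneg fun v _ => sq_nonneg (γ v)).1 hγ.symm v hv
    rw [← hγ, Finset.sum_eq_zero fun v hv => by rw [hγ0 v hv, zero_smul]]
    simp
  · rw [← div_le_iff₀ hγ]
    exact le_csSup (bddAbove_rayleighQuotients V) (norm_sq_div_mem_rayleighQuotients V γ hγ)

end RayleighQuotients

section Partition

open Submodule

variable {m : ℕ}

theorem sigmaMin_mul_fVec_union_le (u : EuclideanSpace ℝ (Fin m))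
    (I J : Finset (EuclideanSpace ℝ (Fin m))) :
    sigmaMin (I ∪ J) * fVec u (I ∪ J) ≤ sigmaMax (I ∪ J) * (fVec u I + fVec u J) := by
  obtain ⟨α, -, hα⟩ := mem_span_finset.1
    (starProjection_apply_mem (span ℝ ((I ∪ J : Finset _) : Set (EuclideanSpace ℝ (Fin m)))) u)
  have hxyz := (Finset.sum_union_eq_sum_add_sum_sdiff I J fun v => α v • v).symm.trans hα
  have hs := Finset.sum_union_eq_sum_add_sum_sdiff I J fun v => α v ^ 2
  set x := (span ℝ ((I ∪ J : Finset _) : Set (EuclideanSpace ℝ (Fin m)))).starProjection u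
  set y := ∑ v ∈ I, α v • v
  set z := ∑ v ∈ J \ I, α v • v
  set s := ∑ v ∈ I ∪ J, α v ^ 2
  set a := ‖(span ℝ (I : Set (EuclideanSpace ℝ (Fin m)))).starProjection u‖
  set b := ‖(span ℝ (J : Set (EuclideanSpace ℝ (Fin m)))).starProjection u‖
  have hy : y ∈ span ℝ (I : Set (EuclideanSpace ℝ (Fin m))) :=
    sum_mem fun v hv => smul_mem _ _ (subset_span hv)
  have hz : z ∈ span ℝ (J : Set (EuclideanSpace ℝ (Fin m))) :=
    sum_mem fun v hv => smul_mem _ _ (subset_span (Finset.sdiff_subset hv))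
  have hxab : ‖x‖ ^ 2 ≤ a * ‖y‖ + b * ‖z‖ := calc
    ‖x‖ ^ 2 = ⟪u, x⟫ := by
      rw [← real_inner_self_eq_norm_sq]
      exact inner_starProjection_eq_of_mem _ u (starProjection_apply_mem _ u)
    _ = ⟪(span ℝ (I : Set (EuclideanSpace ℝ (Fin m)))).starProjection u, y⟫ +
        ⟪(span ℝ (J : Set (EuclideanSpace ℝ (Fin m)))).starProjection u, z⟫ := by
      rw [← hxyz, inner_add_right, inner_starProjection_eq_of_mem _ u hy,
        inner_starProjection_eq_of_mem _ u hz]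
    _ ≤ a * ‖y‖ + b * ‖z‖ := add_le_add (real_inner_le_norm _ _) (real_inner_le_norm _ _)
  have hyz : ‖y‖ ^ 2 + ‖z‖ ^ 2 ≤ sigmaMax (I ∪ J) * s := by
    rw [hs, mul_add]
    exact add_le_add (norm_sq_le_sigmaMax_mul_sum_sq Finset.subset_union_left α)
      (norm_sq_le_sigmaMax_mul_sum_sq (Finset.sdiff_subset.trans Finset.subset_union_right) α)
  have hxs : sigmaMin (I ∪ J) * s ≤ ‖x‖ ^ 2 := hα ▸ sigmaMin_mul_sum_sq_le_norm_sq (I ∪ J) α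
  have hx4 : (‖x‖ ^ 2) ^ 2 ≤ (a ^ 2 + b ^ 2) * (sigmaMax (I ∪ J) * s) := calc
    (‖x‖ ^ 2) ^ 2 ≤ (a * ‖y‖ + b * ‖z‖) ^ 2 := by gcongr
    _ ≤ (a ^ 2 + b ^ 2) * (‖y‖ ^ 2 + ‖z‖ ^ 2) := by nlinarith [sq_nonneg (a * ‖z‖ - b * ‖y‖)]
    _ ≤ (a ^ 2 + b ^ 2) * (sigmaMax (I ∪ J) * s) := by gcongr
  change sigmaMin (I ∪ J) * ‖x‖ ^ 2 ≤ sigmaMax (I ∪ J) * (a ^ 2 + b ^ 2)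
  exact mul_le_mul_of_sq_le_mul_of_mul_le (sigmaMin_nonneg _) (sigmaMax_nonneg _)
    (by positivity) (by positivity) hx4 hxs

lemma fMat_nonneg {n : ℕ} (A : Fin n → EuclideanSpace ℝ (Fin m))
    (S : Finset (EuclideanSpace ℝ (Fin m))) : 0 ≤ fMat A S :=
  Finset.sum_nonneg fun _ _ => sq_nonneg _

theorem sigmaMin_mul_fMat_union_le {n : ℕ} (A : Fin n → EuclideanSpace ℝ (Fin m))
    (I J : Finset (EuclideanSpace ℝ (Fin m))) :
    sigmaMin (I ∪ J) * fMat A (I ∪ J) ≤ sigmaMax (I ∪ J) * (fMat A I + fMat A J) := by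
  simp only [fMat, Finset.mul_sum, ← Finset.sum_add_distrib]
  exact Finset.sum_le_sum fun j _ => sigmaMin_mul_fVec_union_le (A j) I J

end Partition

theorem fMat_partition_additivity_general {m n : ℕ}
    (A : Fin n → EuclideanSpace ℝ (Fin m))
    (V I J : Finset (EuclideanSpace ℝ (Fin m)))
    (hunion : I ∪ J = V) :
    sigmaMin V * fMat A V / (2 * sigmaMax V) ≤ fMat A I + fMat A J := by
  subst hunion
  have hIJ : 0 ≤ fMat A I + fMat A J := add_nonneg (fMat_nonneg A I) (fMat_nonneg A J)
  rcases (sigmaMax_nonneg (I ∪ J)).eq_or_lt with hmax | hmax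
  · rwa [← hmax, mul_zero, div_zero]
  · rw [div_le_iff₀ (by positivity)]
    nlinarith [sigmaMin_mul_fMat_union_le A I J]

/-- Near-additivity of f_A under partitioning, up to the condition number. -/
theorem fMat_partition_additivity {m n : ℕ}
    (A : Fin n → EuclideanSpace ℝ (Fin m))
    (V I J : Finset (EuclideanSpace ℝ (Fin m)))
    (hσ : 0 < sigmaMin V)
    (hunion : I ∪ J = V) (hinter : I ∩ J = ∅) :
    sigmaMin V * fMat A V / (2 * sigmaMax V) ≤ fMat A I + fMat A J :=
  fMat_partition_additivity_general A V I J hunion
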